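/- In a symmetric monoidal category, if the symmetry (switch) morphism on L ⊗ L is the identity for an invertible object L, then for any two integers m, n, the canonical coherence isomorphism L^{⊗m} ⊗ L^{⊗n} ≅ L^{⊗n} ⊗ L^{⊗m} given by the symmetry equals the one given by reassociation; i.e. the full subcategory generated by tensor powers of L is symmetric monoidally equivalent to one where the symmetry is trivial. -/

import Mathlib

/-!
By the hexagon identity, `β_ L L^{n+1}` is `β_ L L^n` followed by a copy of `β_ L L`, so when
`β_ L L = 𝟙` every `β_ L L^n`, and by symmetry every `β_ L^n L`, is a purely structural
isomorphism. The hexagon identity again writes `β_ L^m L^{n+1}` through `β_ L^m L^n` and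
`β_ L^m L`, and induction on `n` identifies it with the reassociation `L^m ⊗ L^n ≅ L^n ⊗ L^m`.
-/

open CategoryTheory MonoidalCategory

/-- The `n`-th tensor power of an object. -/
def tpow {C : Type*} [Category C] [MonoidalCategory C] (L : C) : ℕ → C
  | 0 => 𝟙_ C
  | n + 1 => tpow L n ⊗ L

/-- The canonical "reassociation" isomorphism `L^{⊗m} ⊗ L^{⊗n} ≅ L^{⊗(m+n)}`. -/
def tpowMul {C : Type*} [Category C] [MonoidalCategory C] (L : C) :
    ∀ m n : ℕ, tpow L m ⊗ tpow L n ≅ tpow L (m + n)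
  | m, 0 => ρ_ (tpow L m)
  | m, n + 1 => (α_ (tpow L m) (tpow L n) L).symm ≪≫ whiskerRightIso (tpowMul L m n) L

section

variable {C : Type*} [Category C] [MonoidalCategory C]

/-- Built from associators and unitors only. -/
def tensorTpowComm (L : C) : ∀ n : ℕ, L ⊗ tpow L n ≅ tpow L n ⊗ L
  | 0 => ρ_ L ≪≫ (λ_ L).symm
  | n + 1 => (α_ L (tpow L n) L).symm ≪≫ whiskerRightIso (tensorTpowComm L n) L

lemma tensorTpowComm_succ_hom (L : C) (n : ℕ) :
    (tensorTpowComm L (n + 1)).hom = (α_ L (tpow L n) L).inv ≫ (tensorTpowComm L n).hom ▷ L :=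
  rfl

lemma tpowMul_succ_hom (L : C) (m n : ℕ) :
    (tpowMul L m (n + 1)).hom = (α_ (tpow L m) (tpow L n) L).inv ≫ (tpowMul L m n).hom ▷ L :=
  rfl

lemma tpowMul_zero_left (L : C) : ∀ n : ℕ,
    (tpowMul L 0 n).hom = (λ_ (tpow L n)).hom ≫ eqToHom (congrArg (tpow L) (Nat.zero_add n).symm)
  | 0 => by simp [tpowMul, tpow, unitors_equal]
  | n + 1 => by
    rw [tpowMul_succ_hom, tpowMul_zero_left L n]
    change (α_ (𝟙_ C) (tpow L n) L).inv ≫ ((λ_ (tpow L n)).hom ≫ eqToHom _) ▷ L =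
      (λ_ (tpow L n ⊗ L)).hom ≫ eqToHom (congrArg (tpow L · ⊗ L) (Nat.zero_add n).symm)
    rw [comp_whiskerRight, eqToHom_whiskerRight, leftUnitor_tensor_hom, Category.assoc]

lemma tpowMul_succ_left (L : C) (m : ℕ) : ∀ n : ℕ,
    (tpowMul L (m + 1) n).hom ≫ eqToHom (congrArg (tpow L) (Nat.succ_add_eq_add_succ m n)) =
      (α_ (tpow L m) L (tpow L n)).hom ≫ tpow L m ◁ (tensorTpowComm L n).hom ≫
        (tpowMul L m (n + 1)).hom
  | 0 => by
    simp only [tpowMul_succ_hom]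
    change (ρ_ _).hom ≫ 𝟙 _ = _ ≫ _ ◁ ((ρ_ L).hom ≫ (λ_ L).inv) ≫ _ ≫ (ρ_ _).hom ▷ L
    monoidal
  | n + 1 => by
    have h : eqToHom (congrArg (tpow L) (Nat.succ_add_eq_add_succ m (n + 1))) =
        eqToHom (congrArg (tpow L) (Nat.succ_add_eq_add_succ m n)) ▷ L :=
      (eqToHom_whiskerRight _ _).symm
    rw [h]
    change ((α_ _ _ L).inv ≫ (tpowMul L (m + 1) n).hom ▷ L) ≫
      eqToHom (congrArg (tpow L) (Nat.succ_add_eq_add_succ m n)) ▷ L = _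
    rw [Category.assoc, ← comp_whiskerRight, tpowMul_succ_left L m n]
    simp only [tpowMul_succ_hom, tensorTpowComm_succ_hom]
    monoidal

variable [SymmetricCategory C] {L : C}

lemma braiding_tpow_right_hom (hL : (β_ L L).hom = 𝟙 (L ⊗ L)) :
    ∀ n : ℕ, (β_ L (tpow L n)).hom = (tensorTpowComm L n).hom
  | 0 => braiding_tensorUnit_right L
  | n + 1 => by
    change (β_ L (tpow L n ⊗ L)).hom = _
    rw [BraidedCategory.braiding_tensor_right_hom, braiding_tpow_right_hom hL n, hL,
      tensorTpowComm_succ_hom]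
    simp

lemma braiding_tpow_left_hom (hL : (β_ L L).hom = 𝟙 (L ⊗ L)) (n : ℕ) :
    (β_ (tpow L n) L).hom = (tensorTpowComm L n).inv := by
  rw [← cancel_epi (β_ L (tpow L n)).hom, SymmetricCategory.symmetry,
    braiding_tpow_right_hom hL n, Iso.hom_inv_id]

lemma braiding_tpow_tpow_hom_comp_tpowMul (hL : (β_ L L).hom = 𝟙 (L ⊗ L)) (m : ℕ) : ∀ n : ℕ,
    (β_ (tpow L m) (tpow L n)).hom ≫ (tpowMul L n m).hom =
      (tpowMul L m n).hom ≫ eqToHom (congrArg (tpow L) (Nat.add_comm m n))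
  | 0 => by
    change (β_ (tpow L m) (𝟙_ C)).hom ≫ _ = (ρ_ _).hom ≫ _
    rw [braiding_tensorUnit_right, tpowMul_zero_left, Category.assoc, Iso.inv_hom_id_assoc]
  | n + 1 => by
    rw [← cancel_mono (eqToHom (congrArg (tpow L) (Nat.succ_add_eq_add_succ n m))),
      Category.assoc, tpowMul_succ_left]
    change (β_ (tpow L m) (tpow L n ⊗ L)).hom ≫ (α_ _ _ _).hom ≫
        _ ◁ (tensorTpowComm L m).hom ≫ (α_ _ _ L).inv ≫ (tpowMul L n m).hom ▷ L =
      (((α_ _ _ L).inv ≫ (tpowMul L m n).hom ▷ L) ≫ eqToHom _) ≫ eqToHom _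
    rw [BraidedCategory.braiding_tensor_right_hom, braiding_tpow_left_hom hL]
    simp only [Category.assoc, Iso.inv_hom_id_assoc, Iso.hom_inv_id_assoc,
      whiskerLeft_inv_hom_assoc]
    rw [← comp_whiskerRight, braiding_tpow_tpow_hom_comp_tpowMul hL m n, comp_whiskerRight,
      eqToHom_whiskerRight]
    congr 2
    exact (eqToHom_trans _ _).symm

end

theorem stmt19_general {C : Type*} [Category C] [MonoidalCategory C] [SymmetricCategory C]
    (L : C) (hL : (β_ L L).hom = 𝟙 (L ⊗ L)) (m n : ℕ) :
    (β_ (tpow L m) (tpow L n)).hom =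
      (tpowMul L m n ≪≫ eqToIso (congrArg (tpow L) (Nat.add_comm m n)) ≪≫
        (tpowMul L n m).symm).hom := by
  rw [Iso.trans_hom, Iso.trans_hom, Iso.symm_hom, eqToIso.hom, ← Category.assoc, Iso.eq_comp_inv]
  exact braiding_tpow_tpow_hom_comp_tpowMul hL m n

/-- If the braiding on `L ⊗ L` is the identity for an invertible object `L` of a symmetric
monoidal category, then for all `m, n` the braiding `L^{⊗m} ⊗ L^{⊗n} ≅ L^{⊗n} ⊗ L^{⊗m}`
agrees with the canonical reassociation isomorphism. -/
theorem stmt19 {C : Type*} [Category C] [MonoidalCategory C] [SymmetricCategory C]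
    (L L' : C) (h1 : Nonempty (L ⊗ L' ≅ 𝟙_ C)) (h2 : Nonempty (L' ⊗ L ≅ 𝟙_ C))
    (hL : (β_ L L).hom = 𝟙 (L ⊗ L)) (m n : ℕ) :
    (β_ (tpow L m) (tpow L n)).hom =
      (tpowMul L m n ≪≫ eqToIso (congrArg (tpow L) (Nat.add_comm m n)) ≪≫
        (tpowMul L n m).symm).hom :=
  stmt19_general L hL m n
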